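/- arXiv:2310.12119 — 5 statements merged into one kernel-verified Lean document; each statement's English description precedes it below -/
import Mathlib

section
/- For any real-valued random variable Z with a density bounded above by M (i.e., its law is absolutely continuous with density f_Z satisfying f_Z ≤ M almost everywhere, M > 0), the variance of Z satisfies Var(Z) ≥ 1/(12 M²). -/
open MeasureTheory ProbabilityTheory

/-! Since `(x - m)² ≥ c² - (c² - (x - m)²)⁺` pointwise, centring at `m = 𝔼[Z]` gives
`Var Z ≥ c² - 𝔼[(c² - (Z - m)²)⁺]`. A density bounded by `M` makes the last expectation at most
`M ∫ (c² - (x - m)²)⁺ dx = 4 M c³ / 3`, and the optimal choice `c = 1 / (2M)` yields `1 / (12 M²)`. -/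

noncomputable def parabolicCap (m c x : ℝ) : ℝ := max (c ^ 2 - (x - m) ^ 2) 0

section

variable {m c : ℝ}

lemma parabolicCap_nonneg (x : ℝ) : 0 ≤ parabolicCap m c x := le_max_right _ _

lemma parabolicCap_le_sq (x : ℝ) : parabolicCap m c x ≤ c ^ 2 :=
  max_le (by nlinarith [sq_nonneg (x - m)]) (sq_nonneg c)

lemma sq_sub_parabolicCap_le (x : ℝ) : c ^ 2 - parabolicCap m c x ≤ (x - m) ^ 2 := by
  have h : c ^ 2 - (x - m) ^ 2 ≤ parabolicCap m c x := le_max_left _ _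
  linarith

lemma continuous_parabolicCap : Continuous (parabolicCap m c) := by
  unfold parabolicCap
  fun_prop

lemma parabolicCap_eq_of_mem {x : ℝ} (hx : x ∈ Set.Icc (m - c) (m + c)) :
    parabolicCap m c x = c ^ 2 - (x - m) ^ 2 :=
  max_eq_left (by nlinarith [hx.1, hx.2])

lemma parabolicCap_eq_zero_of_notMem (hc : 0 ≤ c) {x : ℝ} (hx : x ∉ Set.Icc (m - c) (m + c)) :
    parabolicCap m c x = 0 := by
  refine max_eq_right ?_
  rw [Set.mem_Icc, not_and_or, not_le, not_le] at hx
  rcases hx with hx | hx <;> nlinarith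

lemma integrable_parabolicCap (hc : 0 ≤ c) : Integrable (parabolicCap m c) :=
  continuous_parabolicCap.integrable_of_hasCompactSupport
    (HasCompactSupport.intro isCompact_Icc fun _ => parabolicCap_eq_zero_of_notMem hc)

lemma integral_parabolicCap (hc : 0 ≤ c) : ∫ x, parabolicCap m c x = 4 * c ^ 3 / 3 := by
  rw [← setIntegral_eq_integral_of_forall_compl_eq_zero fun _ =>
      parabolicCap_eq_zero_of_notMem hc,
    integral_Icc_eq_integral_Ioc, ← intervalIntegral.integral_of_le (by linarith),
    intervalIntegral.integral_congr fun x hx =>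
      parabolicCap_eq_of_mem ((Set.uIcc_of_le (by linarith : m - c ≤ m + c)) ▸ hx),
    intervalIntegral.integral_sub intervalIntegrable_const
      ((by fun_prop : Continuous fun x : ℝ => (x - m) ^ 2).intervalIntegrable _ _),
    intervalIntegral.integral_comp_sub_right fun x => x ^ 2]
  simp only [intervalIntegral.integral_const, add_sub_sub_cancel, smul_eq_mul,
    sub_sub_cancel_left, add_sub_cancel_left, integral_pow]
  ring

end

lemma withDensity_le_smul_of_ae_le {α : Type*} [MeasurableSpace α] {ν : Measure α}
    {f : α → ENNReal} {K : ENNReal} (hf : ∀ᵐ x ∂ν, f x ≤ K) : ν.withDensity f ≤ K • ν :=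
  withDensity_const (μ := ν) K ▸ withDensity_mono hf

section

variable {Ω : Type*} [MeasurableSpace Ω] {μ : Measure Ω}

lemma integral_comp_le_mul_integral_of_map_le_smul {α : Type*} [MeasurableSpace α]
    {ν : Measure α} {X : Ω → α} (hX : AEMeasurable X μ) {K : ℝ} (hK : 0 ≤ K)
    (hmap : μ.map X ≤ ENNReal.ofReal K • ν) {g : α → ℝ} (hg : Measurable g) (hg0 : 0 ≤ g)
    (hgi : Integrable g ν) :
    ∫ ω, g (X ω) ∂μ ≤ K * ∫ x, g x ∂ν := by
  rw [← integral_map hX hg.aestronglyMeasurable]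
  calc ∫ x, g x ∂μ.map X ≤ ∫ x, g x ∂(ENNReal.ofReal K • ν) :=
        integral_mono_measure hmap (.of_forall hg0) (hgi.smul_measure ENNReal.ofReal_ne_top)
    _ = K * ∫ x, g x ∂ν := by rw [integral_smul_measure, ENNReal.toReal_ofReal hK, smul_eq_mul]

lemma sq_sub_integral_parabolicCap_le_variance [IsProbabilityMeasure μ] {X : Ω → ℝ}
    (hX : MemLp X 2 μ) (c : ℝ) :
    c ^ 2 - ∫ ω, parabolicCap μ[X] c (X ω) ∂μ ≤ variance X μ := by
  have hcap : Integrable (fun ω => parabolicCap μ[X] c (X ω)) μ :=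
    (integrable_const (c ^ 2)).mono'
      (continuous_parabolicCap.comp_aestronglyMeasurable hX.1)
      (.of_forall fun ω => by
        rw [Real.norm_eq_abs, abs_of_nonneg (parabolicCap_nonneg _)]
        exact parabolicCap_le_sq _)
  calc c ^ 2 - ∫ ω, parabolicCap μ[X] c (X ω) ∂μ
      = ∫ ω, (c ^ 2 - parabolicCap μ[X] c (X ω)) ∂μ := by
        rw [integral_sub (integrable_const _) hcap, integral_const, probReal_univ, one_smul]
    _ ≤ ∫ ω, (X ω - μ[X]) ^ 2 ∂μ :=
        integral_mono ((integrable_const _).sub hcap) (hX.sub (memLp_const _)).integrable_sq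
          fun ω => sq_sub_parabolicCap_le (X ω)
    _ = variance X μ := (variance_eq_integral hX.1.aemeasurable).symm

end

theorem variance_ge_of_density_le_general
    {Ω : Type*} [MeasurableSpace Ω] (μ : Measure Ω) [IsProbabilityMeasure μ]
    (Z : Ω → ℝ) (hL2 : MemLp Z 2 μ)
    (f : ℝ → ENNReal) (M : ℝ) (hM : 0 < M)
    (hdens : Measure.map Z μ = (volume : Measure ℝ).withDensity f)
    (hbound : ∀ᵐ x ∂(volume : Measure ℝ), f x ≤ ENNReal.ofReal M) :
    1 / (12 * M ^ 2) ≤ variance Z μ := by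
  set c := 1 / (2 * M)
  have hc : 0 ≤ c := by positivity
  have hcap : ∫ ω, parabolicCap μ[Z] c (Z ω) ∂μ ≤ M * (4 * c ^ 3 / 3) := by
    rw [← integral_parabolicCap hc]
    exact integral_comp_le_mul_integral_of_map_le_smul hL2.1.aemeasurable hM.le
      (hdens ▸ withDensity_le_smul_of_ae_le hbound) continuous_parabolicCap.measurable
      parabolicCap_nonneg (integrable_parabolicCap hc)
  have hc_opt : c ^ 2 - M * (4 * c ^ 3 / 3) = 1 / (12 * M ^ 2) := by
    simp only [c]
    field_simp
    ring
  linarith [sq_sub_integral_parabolicCap_le_variance hL2 c]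

/-- If a real random variable `Z` has a Lebesgue density bounded by `M > 0`,
then `Var(Z) ≥ 1/(12 M²)`. -/
theorem variance_ge_of_density_le
    {Ω : Type*} [MeasurableSpace Ω] (μ : Measure Ω) [IsProbabilityMeasure μ]
    (Z : Ω → ℝ) (hZ : Measurable Z) (hL2 : MemLp Z 2 μ)
    (f : ℝ → ENNReal) (M : ℝ) (hM : 0 < M)
    (hdens : Measure.map Z μ = (volume : Measure ℝ).withDensity f)
    (hbound : ∀ᵐ x ∂(volume : Measure ℝ), f x ≤ ENNReal.ofReal M) :
    1 / (12 * M ^ 2) ≤ variance Z μ :=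
  variance_ge_of_density_le_general μ Z hL2 f M hM hdens hbound
end

section
/- For every real-valued random variable Z (with finite variance) and every ε > 0, the Lévy concentration function satisfies Q(Z, ε) := sup_{t ∈ ℝ} P(t ≤ Z ≤ t + ε) ≥ (ε/√12) / √(Var(Z) + ε²/12). -/
/-!
Smoothing `Z` by an independent `U ~ Unif(0, 1)` gives `Z + εU`, whose density
`y ↦ P(y - ε ≤ Z < y) / ε` is bounded by `Q(Z, ε) / ε` and whose variance is
`Var Z + ε² / 12`. Among nonnegative functions of given mass bounded by `M`, the second moment
about any point is smallest for the indicator of an interval centred there (bathtub principle),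
which gives `Var ≥ 1 / (12 M²)` for a probability density bounded by `M`. Only the function
`y ↦ P(y - ε ≤ Z < y)` is needed: Tonelli's theorem gives its mass `ε` and its second moment
`ε (Var Z + ε² / 12)` about `E Z + ε / 2`, so `U` is never constructed.
-/

open MeasureTheory ProbabilityTheory Set
open scoped ENNReal

theorem ENNReal.mul_add_mul_le_mul_add_mul {a b c d : ℝ≥0∞} (hab : a ≤ b) (hcd : c ≤ d) :
    a * d + b * c ≤ a * c + b * d := by
  obtain ⟨e, rfl⟩ := exists_add_of_le hab
  obtain ⟨f, rfl⟩ := exists_add_of_le hcd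
  calc a * (c + f) + (a + e) * c ≤ a * (c + f) + (a + e) * c + e * f := le_self_add
    _ = a * c + (a + e) * (c + f) := by ring

theorem pos_of_le_ofReal_of_lintegral_ne_zero {α : Type*} [MeasurableSpace α] {μ : Measure α}
    {f : α → ℝ≥0∞} {M : ℝ} (hf : ∀ x, f x ≤ ENNReal.ofReal M)
    (h : ∫⁻ x, f x ∂μ ≠ 0) : 0 < M := by
  by_contra! hM
  have hf0 : ∀ x, f x = 0 := by simpa [ENNReal.ofReal_eq_zero.2 hM] using hf
  simp [hf0] at h

theorem lintegral_sq_sub_mul_indicator_Icc (a : ℝ) {δ M : ℝ} (hδ : 0 ≤ δ) (hM : 0 ≤ M) :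
    ∫⁻ y, ENNReal.ofReal ((y - a) ^ 2) *
        (Icc (a - δ) (a + δ)).indicator (fun _ => ENNReal.ofReal M) y =
      ENNReal.ofReal (2 * M * δ ^ 3 / 3) := by
  simp_rw [← indicator_mul_right (s := Icc _ _) (fun y => ENNReal.ofReal ((y - a) ^ 2)),
    ← ENNReal.ofReal_mul (sq_nonneg _)]
  rw [lintegral_indicator measurableSet_Icc, ← ofReal_integral_eq_lintegral_ofReal
      (Continuous.integrableOn_Icc (by fun_prop))
      (.of_forall fun _ => mul_nonneg (sq_nonneg _) hM),
    integral_Icc_eq_integral_Ioc, ← intervalIntegral.integral_of_le (by linarith),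
    intervalIntegral.integral_mul_const, intervalIntegral.integral_comp_sub_right (· ^ 2),
    integral_pow]
  ring_nf

theorem le_lintegral_sq_sub_mul_of_le {f : ℝ → ℝ≥0∞} {m M : ℝ} (a : ℝ) (hm : 0 ≤ m)
    (hM : 0 < M) (hf : ∀ y, f y ≤ ENNReal.ofReal M) (hmass : ∫⁻ y, f y = ENNReal.ofReal m) :
    ENNReal.ofReal (m ^ 3 / (12 * M ^ 2)) ≤ ∫⁻ y, ENNReal.ofReal ((y - a) ^ 2) * f y := by
  set δ := m / (2 * M) with hδ_def
  have hδ : 0 ≤ δ := by positivity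
  set g : ℝ → ℝ≥0∞ := (Icc (a - δ) (a + δ)).indicator fun _ => ENNReal.ofReal M
  have hg : Measurable g := measurable_const.indicator measurableSet_Icc
  have hg_mass : ∫⁻ y, g y = ENNReal.ofReal m := by
    rw [lintegral_indicator_const measurableSet_Icc, Real.volume_Icc,
      ← ENNReal.ofReal_mul hM.le, hδ_def]
    congr 1
    field_simp
    ring
  have hg_moment :
      ∫⁻ y, ENNReal.ofReal ((y - a) ^ 2) * g y = ENNReal.ofReal (m ^ 3 / (12 * M ^ 2)) := by
    rw [lintegral_sq_sub_mul_indicator_Icc a hδ hM.le, hδ_def]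
    congr 1
    field_simp
    ring
  -- `((y - a)² - δ²) (f y - g y) ≥ 0`, written without subtraction
  have hpt : ∀ y, ENNReal.ofReal ((y - a) ^ 2) * g y + ENNReal.ofReal (δ ^ 2) * f y ≤
      ENNReal.ofReal ((y - a) ^ 2) * f y + ENNReal.ofReal (δ ^ 2) * g y := by
    intro y
    by_cases hy : y ∈ Icc (a - δ) (a + δ)
    · have hya : (y - a) ^ 2 ≤ δ ^ 2 := sq_le_sq' (by linarith [hy.1]) (by linarith [hy.2])
      rw [show g y = ENNReal.ofReal M from indicator_of_mem hy _]
      exact ENNReal.mul_add_mul_le_mul_add_mul (ENNReal.ofReal_le_ofReal hya) (hf y)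
    · have hya : δ ^ 2 ≤ (y - a) ^ 2 := by
        rw [mem_Icc, not_and_or, not_le, not_le] at hy
        rcases hy with hy | hy <;> nlinarith
      rw [show g y = 0 from indicator_of_notMem hy _, mul_zero, mul_zero, zero_add, add_zero]
      exact mul_le_mul_left (ENNReal.ofReal_le_ofReal hya) _
  have hint := lintegral_mono (μ := volume) hpt
  rw [lintegral_add_left (by fun_prop), lintegral_add_right _ (by fun_prop),
    lintegral_const_mul' _ _ ENNReal.ofReal_ne_top, lintegral_const_mul' _ _ ENNReal.ofReal_ne_top,
    hmass, hg_mass, hg_moment] at hint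
  exact (ENNReal.add_le_add_iff_right (by finiteness)).1 hint

section Smoothing

variable {Ω : Type*} [MeasurableSpace Ω] {μ : Measure Ω} {X : Ω → ℝ}

theorem lintegral_mul_measure_preimage_Ico [SFinite μ] (hX : Measurable X)
    {φ : ℝ → ℝ≥0∞} (hφ : Measurable φ) (ε : ℝ) :
    ∫⁻ y, φ y * μ (X ⁻¹' Ico (y - ε) y) =
      ∫⁻ ω, (∫⁻ y in Ioc (X ω) (X ω + ε), φ y) ∂μ := by
  have hS : MeasurableSet {p : ℝ × Ω | X p.2 < p.1 ∧ p.1 ≤ X p.2 + ε} :=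
    (measurableSet_lt (hX.comp measurable_snd) measurable_fst).inter
      (measurableSet_le measurable_fst ((hX.comp measurable_snd).add_const ε))
  calc ∫⁻ y, φ y * μ (X ⁻¹' Ico (y - ε) y)
      = ∫⁻ y, ∫⁻ ω, (Ioc (X ω) (X ω + ε)).indicator φ y ∂μ := by
        refine lintegral_congr fun y => ?_
        rw [← lintegral_indicator_one (hX measurableSet_Ico),
          ← lintegral_const_mul _ (measurable_one.indicator (hX measurableSet_Ico))]
        refine lintegral_congr fun ω => ?_
        by_cases h : ω ∈ X ⁻¹' Ico (y - ε) y
        · have hy : y ∈ Ioc (X ω) (X ω + ε) := ⟨h.2, by linarith [h.1]⟩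
          rw [indicator_of_mem h, indicator_of_mem hy, Pi.one_apply, mul_one]
        · have hy : y ∉ Ioc (X ω) (X ω + ε) := fun hy => h ⟨by linarith [hy.2], hy.1⟩
          rw [indicator_of_notMem h, indicator_of_notMem hy, mul_zero]
    _ = ∫⁻ ω, (∫⁻ y, (Ioc (X ω) (X ω + ε)).indicator φ y) ∂μ :=
        lintegral_lintegral_swap ((hφ.comp measurable_fst).indicator hS).aemeasurable
    _ = _ := by simp_rw [lintegral_indicator measurableSet_Ioc]

theorem lintegral_measure_preimage_Ico [IsProbabilityMeasure μ] (hX : Measurable X) (ε : ℝ) :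
    ∫⁻ y, μ (X ⁻¹' Ico (y - ε) y) = ENNReal.ofReal ε := by
  simpa using lintegral_mul_measure_preimage_Ico (μ := μ) hX measurable_one ε

theorem lintegral_Ioc_sq_sub (c x : ℝ) {ε : ℝ} (hε : 0 ≤ ε) :
    ∫⁻ y in Ioc x (x + ε), ENNReal.ofReal ((y - (c + ε / 2)) ^ 2) =
      ENNReal.ofReal (ε * ((x - c) ^ 2 + ε ^ 2 / 12)) := by
  rw [← ofReal_integral_eq_lintegral_ofReal
      (Continuous.integrableOn_Ioc (by fun_prop)) (.of_forall fun _ => sq_nonneg _),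
    ← intervalIntegral.integral_of_le (by linarith),
    intervalIntegral.integral_comp_sub_right (· ^ 2), integral_pow]
  ring_nf

theorem lintegral_sq_mul_measure_preimage_Ico [IsProbabilityMeasure μ] (hX : Measurable X)
    (hX2 : MemLp X 2 μ) {ε : ℝ} (hε : 0 ≤ ε) :
    ∫⁻ y, ENNReal.ofReal ((y - (μ[X] + ε / 2)) ^ 2) * μ (X ⁻¹' Ico (y - ε) y) =
      ENNReal.ofReal (ε * (variance X μ + ε ^ 2 / 12)) := by
  rw [lintegral_mul_measure_preimage_Ico hX (by fun_prop)]
  simp_rw [lintegral_Ioc_sq_sub _ _ hε, ENNReal.ofReal_mul hε,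
    ENNReal.ofReal_add (sq_nonneg _) (by positivity : 0 ≤ ε ^ 2 / 12)]
  rw [lintegral_const_mul' _ _ ENNReal.ofReal_ne_top, lintegral_add_right _ measurable_const,
    lintegral_const, measure_univ, mul_one, ← evariance_eq_lintegral_ofReal,
    ← hX2.ofReal_variance_eq, ← ENNReal.ofReal_add (variance_nonneg X μ) (by positivity)]

theorem measure_preimage_Ico_le_ofReal_iSup [IsFiniteMeasure μ] (ε y : ℝ) :
    μ (X ⁻¹' Ico (y - ε) y) ≤
      ENNReal.ofReal (⨆ t : ℝ, (μ {ω | t ≤ X ω ∧ X ω ≤ t + ε}).toReal) := by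
  have hbdd : BddAbove (range fun t : ℝ => (μ {ω | t ≤ X ω ∧ X ω ≤ t + ε}).toReal) :=
    ⟨(μ univ).toReal, by
      rintro _ ⟨t, rfl⟩
      exact ENNReal.toReal_mono (measure_ne_top _ _) (measure_mono (subset_univ _))⟩
  calc μ (X ⁻¹' Ico (y - ε) y)
      ≤ μ {ω | y - ε ≤ X ω ∧ X ω ≤ y - ε + ε} :=
        measure_mono fun ω hω => ⟨hω.1, by simpa using hω.2.le⟩
    _ = ENNReal.ofReal (μ {ω | y - ε ≤ X ω ∧ X ω ≤ y - ε + ε}).toReal :=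
        (ENNReal.ofReal_toReal (measure_ne_top _ _)).symm
    _ ≤ _ := ENNReal.ofReal_le_ofReal (le_ciSup hbdd (y - ε))

end Smoothing

theorem div_sqrt_twelve_div_sqrt_le {ε Q W : ℝ} (hε : 0 < ε) (hQ : 0 < Q)
    (h : ε ^ 3 / (12 * Q ^ 2) ≤ ε * W) : ε / √12 / √W ≤ Q := by
  have hW : 0 < W :=
    pos_of_mul_pos_right ((by positivity : 0 < ε ^ 3 / (12 * Q ^ 2)).trans_le h) hε.le
  have key : ε ^ 2 / 12 ≤ Q ^ 2 * W := by
    rw [div_le_iff₀ (by positivity)] at h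
    nlinarith
  rw [div_le_iff₀ (Real.sqrt_pos.2 hW)]
  calc ε / √12 = √(ε ^ 2 / 12) := by rw [Real.sqrt_div (sq_nonneg ε), Real.sqrt_sq hε.le]
    _ ≤ √(Q ^ 2 * W) := Real.sqrt_le_sqrt key
    _ = Q * √W := by rw [Real.sqrt_mul (sq_nonneg _), Real.sqrt_sq hQ.le]

/-- Lower bound on the Lévy concentration function of any real random variable with
finite variance: `Q(Z, ε) ≥ (ε/√12)/√(Var(Z) + ε²/12)`. -/
theorem concentration_lower_bound
    {Ω : Type*} [MeasurableSpace Ω] (μ : Measure Ω) [IsProbabilityMeasure μ]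
    (Z : Ω → ℝ) (hZ : Measurable Z) (hL2 : MemLp Z 2 μ)
    (ε : ℝ) (hε : 0 < ε) :
    (ε / Real.sqrt 12) / Real.sqrt (variance Z μ + ε ^ 2 / 12) ≤
      ⨆ t : ℝ, (μ {ω | t ≤ Z ω ∧ Z ω ≤ t + ε}).toReal := by
  set Q := ⨆ t : ℝ, (μ {ω | t ≤ Z ω ∧ Z ω ≤ t + ε}).toReal
  have hf : ∀ y, μ (Z ⁻¹' Ico (y - ε) y) ≤ ENNReal.ofReal Q :=
    measure_preimage_Ico_le_ofReal_iSup ε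
  have hmass := lintegral_measure_preimage_Ico (μ := μ) hZ ε
  have hQ : 0 < Q :=
    pos_of_le_ofReal_of_lintegral_ne_zero (μ := volume) hf (by simpa [hmass] using hε)
  have hmoment := le_lintegral_sq_sub_mul_of_le (μ[Z] + ε / 2) hε.le hQ hf hmass
  rw [lintegral_sq_mul_measure_preimage_Ico hZ hL2 hε.le,
    ENNReal.ofReal_le_ofReal_iff (by have := variance_nonneg Z μ; positivity)] at hmoment
  exact div_sqrt_twelve_div_sqrt_le hε hQ hmoment
end

section
/- For all a ≥ 0, a ≤ erf(a)·√(1 + a²) ≤ √2 · a, where erf(a) = (2/√π) ∫₀^a e^{−t²} dt. -/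
open MeasureTheory Real

/-- The Gauss error function `erf(a) = (2/√π) ∫₀^a e^{−t²} dt`. -/
noncomputable def erf (a : ℝ) : ℝ := (2 / Real.sqrt π) * ∫ t in (0:ℝ)..a, Real.exp (-t ^ 2)

/-!
Both bounds compare `erf` with the algebraic sigmoid `g(x) = x / √(1 + x²)`, whose derivative is
`(1 + x²)^(-3/2)`; the sign of `(erf - c g)'` is that of `ψ - c √π / 2`, where
`ψ(x) = e^{-x²} (1 + x²)^(3/2)`. Since `ψ ≤ √(π/2)` everywhere, `erf - √2 g` is antitone and
vanishes at `0`. The function `ψ` increases on `[0, 1/√2]`, decreases afterwards and starts at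
`ψ 0 = 1 > √π / 2`, so `erf - g` first increases and then decreases on `[0, ∞)`; as it vanishes at
`0` and at `∞`, it is nonnegative there.
-/

open Filter Set Topology

lemma min_le_of_deriv_nonneg_or_nonpos {f : ℝ → ℝ} (hf : Differentiable ℝ f) {l a : ℝ}
    (hl : Tendsto f atTop (𝓝 l)) (ha : 0 ≤ a)
    (hsign : (∀ x ∈ Icc 0 a, 0 ≤ deriv f x) ∨ ∀ x ∈ Ici a, deriv f x ≤ 0) :
    min (f 0) l ≤ f a := by
  rcases hsign with hmono | hanti
  · have := monotoneOn_of_deriv_nonneg (convex_Icc 0 a) hf.continuous.continuousOn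
      hf.differentiableOn fun x hx => hmono x (interior_subset hx)
    exact min_le_of_left_le (this (left_mem_Icc.2 ha) (right_mem_Icc.2 ha) ha)
  · have := antitoneOn_of_deriv_nonpos (convex_Ici a) hf.continuous.continuousOn
      hf.differentiableOn fun x hx => hanti x (interior_subset hx)
    refine min_le_of_right_le (le_of_tendsto hl ?_)
    filter_upwards [eventually_ge_atTop a] with x hx
    exact this self_mem_Ici hx hx

lemma le_on_Icc_or_ge_on_Ici_of_unimodal {ψ : ℝ → ℝ} {r c a : ℝ}
    (hmono : MonotoneOn ψ (Icc 0 r)) (hanti : AntitoneOn ψ (Ici r)) (hc : c ≤ ψ 0)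
    (ha : 0 ≤ a) : (∀ x ∈ Icc 0 a, c ≤ ψ x) ∨ ∀ x ∈ Ici a, ψ x ≤ c := by
  by_cases hca : c ≤ ψ a
  · refine Or.inl fun x hx => ?_
    rcases le_total x r with hxr | hrx
    · exact hc.trans (hmono ⟨le_rfl, hx.1.trans hxr⟩ ⟨hx.1, hxr⟩ hx.1)
    · exact hca.trans (hanti hrx (hrx.trans hx.2) hx.2)
  · push Not at hca
    have hra : r ≤ a := by
      by_contra! har
      exact not_le.2 hca (hc.trans (hmono ⟨le_rfl, ha.trans har.le⟩ ⟨ha, har.le⟩ ha))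
    exact Or.inr fun x hx => (hanti hra (hra.trans hx) hx).trans hca.le

lemma hasDerivAt_erf (x : ℝ) : HasDerivAt erf (2 / √π * exp (-x ^ 2)) x := by
  have hcont : Continuous fun t : ℝ => exp (-t ^ 2) := by fun_prop
  exact (intervalIntegral.integral_hasDerivAt_right (hcont.intervalIntegrable 0 x)
    hcont.aestronglyMeasurable.stronglyMeasurableAtFilter hcont.continuousAt).const_mul _

lemma erf_zero : erf 0 = 0 := by simp [erf]

lemma tendsto_erf_atTop : Tendsto erf atTop (𝓝 1) := by
  have hint : IntegrableOn (fun t : ℝ => exp (-t ^ 2)) (Ioi 0) := by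
    simpa using (integrable_exp_neg_mul_sq one_pos).integrableOn
  have h := (intervalIntegral_tendsto_integral_Ioi 0 hint tendsto_id).const_mul (2 / √π)
  have hval : ∫ t in Ioi (0:ℝ), exp (-t ^ 2) = √π / 2 := by
    simpa using integral_gaussian_Ioi 1
  rwa [hval, div_mul_div_cancel₀ (sqrt_pos.2 pi_pos).ne', div_self two_ne_zero] at h

lemma sqrt_one_add_sq_pos (x : ℝ) : 0 < √(1 + x ^ 2) := sqrt_pos.2 (by positivity)

lemma sq_sqrt_one_add_sq (x : ℝ) : √(1 + x ^ 2) ^ 2 = 1 + x ^ 2 := sq_sqrt (by positivity)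

lemma hasDerivAt_sqrt_one_add_sq (x : ℝ) :
    HasDerivAt (fun x => √(1 + x ^ 2)) (x / √(1 + x ^ 2)) x := by
  refine (((hasDerivAt_pow 2 x).const_add 1).sqrt (by positivity)).congr_deriv ?_
  field_simp
  norm_num

noncomputable def algSigmoid (x : ℝ) : ℝ := x / √(1 + x ^ 2)

lemma hasDerivAt_algSigmoid (x : ℝ) : HasDerivAt algSigmoid (√(1 + x ^ 2) ^ 3)⁻¹ x := by
  have hs := sqrt_one_add_sq_pos x
  refine ((hasDerivAt_id' x).fun_div (hasDerivAt_sqrt_one_add_sq x) hs.ne').congr_deriv ?_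
  field_simp
  linear_combination sq_sqrt_one_add_sq x

lemma tendsto_algSigmoid_atTop : Tendsto algSigmoid atTop (𝓝 1) := by
  have hlow : Tendsto (fun x : ℝ => 1 - x⁻¹) atTop (𝓝 1) := by
    simpa using tendsto_inv_atTop_zero.const_sub (1 : ℝ)
  refine tendsto_of_tendsto_of_tendsto_of_le_of_le' hlow tendsto_const_nhds ?_ ?_ <;>
    filter_upwards [eventually_ge_atTop 1] with x hx <;>
    have hs := sqrt_one_add_sq_pos x <;>
    have h2 := sq_sqrt_one_add_sq x
  · have hle : √(1 + x ^ 2) ≤ 1 + x := by nlinarith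
    have hinv : 0 ≤ 1 - x⁻¹ := sub_nonneg.2 (inv_le_one_of_one_le₀ hx)
    have hprod : (1 - x⁻¹) * (1 + x) = x - x⁻¹ := by field_simp; ring
    rw [algSigmoid, le_div_iff₀ hs]
    nlinarith [inv_pos.2 (zero_lt_one.trans_le hx)]
  · rw [algSigmoid, div_le_one hs]
    nlinarith

-- `√π / 2` times `erf' / algSigmoid'`
noncomputable def derivRatio (x : ℝ) : ℝ := exp (-x ^ 2) * √(1 + x ^ 2) ^ 3

lemma hasDerivAt_derivRatio (x : ℝ) :
    HasDerivAt derivRatio (x * exp (-x ^ 2) * √(1 + x ^ 2) * (1 - 2 * x ^ 2)) x := by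
  have hexp : HasDerivAt (fun x : ℝ => exp (-x ^ 2)) (-(2 * x) * exp (-x ^ 2)) x := by
    simpa [mul_comm] using ((hasDerivAt_pow 2 x).neg).exp
  refine (hexp.fun_mul ((hasDerivAt_sqrt_one_add_sq x).fun_pow 3)).congr_deriv ?_
  have hs := sqrt_one_add_sq_pos x
  field_simp
  linear_combination (-2 * x * √(1 + x ^ 2) ^ 2) * sq_sqrt_one_add_sq x

lemma differentiable_derivRatio : Differentiable ℝ derivRatio :=
  fun x => (hasDerivAt_derivRatio x).differentiableAt

lemma derivRatio_zero : derivRatio 0 = 1 := by simp [derivRatio]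

lemma derivRatio_monotoneOn : MonotoneOn derivRatio (Icc 0 √(1 / 2)) := by
  refine monotoneOn_of_deriv_nonneg (convex_Icc _ _)
    differentiable_derivRatio.continuous.continuousOn differentiable_derivRatio.differentiableOn
    fun x hx => ?_
  rw [interior_Icc] at hx
  have hx2 : x ^ 2 < 1 / 2 :=
    sq_sqrt (by norm_num : (0:ℝ) ≤ 1 / 2) ▸ pow_lt_pow_left₀ hx.2 hx.1.le two_ne_zero
  have := hx.1
  rw [(hasDerivAt_derivRatio x).deriv]
  exact mul_nonneg (by positivity) (by linarith)

lemma derivRatio_antitoneOn : AntitoneOn derivRatio (Ici √(1 / 2)) := by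
  refine antitoneOn_of_deriv_nonpos (convex_Ici _)
    differentiable_derivRatio.continuous.continuousOn differentiable_derivRatio.differentiableOn
    fun x hx => ?_
  rw [interior_Ici] at hx
  have hx2 : 1 / 2 < x ^ 2 :=
    sq_sqrt (by norm_num : (0:ℝ) ≤ 1 / 2) ▸ pow_lt_pow_left₀ hx (sqrt_nonneg _) two_ne_zero
  have : 0 < x := (sqrt_nonneg _).trans_lt hx
  rw [(hasDerivAt_derivRatio x).deriv]
  exact mul_nonpos_of_nonneg_of_nonpos (by positivity) (by linarith)

lemma one_add_pow_three_le_exp {y : ℝ} (hy : 0 ≤ y) : (1 + y) ^ 3 ≤ 3 / 2 * exp (2 * y) := by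
  have h := sum_le_exp_of_nonneg (mul_nonneg zero_le_two hy) 4
  norm_num [Finset.sum_range_succ, Nat.factorial] at h
  nlinarith [pow_nonneg hy 3]

lemma derivRatio_le (x : ℝ) : derivRatio x ≤ √(π / 2) := by
  have he : exp (-x ^ 2) ^ 2 * exp (2 * x ^ 2) = 1 := by
    rw [sq, ← exp_add, ← exp_add]; ring_nf; exact exp_zero
  have hsq : derivRatio x ^ 2 * exp (2 * x ^ 2) = (1 + x ^ 2) ^ 3 := by
    rw [derivRatio, mul_pow, ← pow_mul, mul_right_comm, he, one_mul, pow_mul',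
      sq_sqrt_one_add_sq]
  rw [le_sqrt (by unfold derivRatio; positivity) (by positivity)]
  nlinarith [one_add_pow_three_le_exp (sq_nonneg x), exp_pos (2 * x ^ 2), pi_gt_three]

lemma hasDerivAt_erf_sub_const_mul_algSigmoid (c x : ℝ) :
    HasDerivAt (fun x => erf x - c * algSigmoid x)
      (2 / √π * (derivRatio x - √π / 2 * c) / √(1 + x ^ 2) ^ 3) x := by
  refine ((hasDerivAt_erf x).sub ((hasDerivAt_algSigmoid x).const_mul c)).congr_deriv ?_
  have := sqrt_one_add_sq_pos x
  have := sqrt_pos.2 pi_pos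
  rw [derivRatio]
  field_simp

lemma algSigmoid_le_erf {a : ℝ} (ha : 0 ≤ a) : algSigmoid a ≤ erf a := by
  have hderiv := fun x => (hasDerivAt_erf_sub_const_mul_algSigmoid 1 x).deriv
  have hc : √π / 2 * 1 ≤ derivRatio 0 := by
    rw [derivRatio_zero, mul_one, div_le_one two_pos]
    exact sqrt_le_iff.2 ⟨zero_le_two, by linarith [pi_le_four]⟩
  have hsign := (le_on_Icc_or_ge_on_Ici_of_unimodal derivRatio_monotoneOn
    derivRatio_antitoneOn hc ha).imp
    (fun h x hx => (hderiv x).symm ▸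
      div_nonneg (mul_nonneg (by positivity) (sub_nonneg.2 (h x hx))) (by positivity))
    (fun h x hx => (hderiv x).symm ▸ div_nonpos_of_nonpos_of_nonneg
      (mul_nonpos_of_nonneg_of_nonpos (by positivity) (sub_nonpos.2 (h x hx))) (by positivity))
  have := min_le_of_deriv_nonneg_or_nonpos
    (fun x => (hasDerivAt_erf_sub_const_mul_algSigmoid 1 x).differentiableAt)
    (tendsto_erf_atTop.sub (tendsto_algSigmoid_atTop.const_mul 1)) ha hsign
  simpa [erf_zero, algSigmoid] using this

lemma erf_le_sqrt_two_mul_algSigmoid {a : ℝ} (ha : 0 ≤ a) : erf a ≤ √2 * algSigmoid a := by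
  have hbound (x : ℝ) : derivRatio x ≤ √π / 2 * √2 := by
    have h : √(π / 2) = √π / 2 * √2 := by
      rw [show π / 2 = π * 2 / 2 ^ 2 by ring, sqrt_div' _ (sq_nonneg 2),
        sqrt_mul pi_pos.le, sqrt_sq zero_le_two]
      ring
    exact h ▸ derivRatio_le x
  have hanti : Antitone fun x => erf x - √2 * algSigmoid x := by
    refine antitone_of_deriv_nonpos
      (fun x => (hasDerivAt_erf_sub_const_mul_algSigmoid _ x).differentiableAt) fun x => ?_
    rw [(hasDerivAt_erf_sub_const_mul_algSigmoid _ x).deriv]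
    exact div_nonpos_of_nonpos_of_nonneg
      (mul_nonpos_of_nonneg_of_nonpos (by positivity) (sub_nonpos.2 (hbound x))) (by positivity)
  simpa [erf_zero, algSigmoid] using hanti ha

/-- For all `a ≥ 0`, `a ≤ erf(a)·√(1 + a²) ≤ √2 · a`. -/
theorem erf_sqrt_bounds (a : ℝ) (ha : 0 ≤ a) :
    a ≤ erf a * Real.sqrt (1 + a ^ 2) ∧ erf a * Real.sqrt (1 + a ^ 2) ≤ Real.sqrt 2 * a := by
  have hs := sqrt_one_add_sq_pos a
  have hg : algSigmoid a * √(1 + a ^ 2) = a := div_mul_cancel₀ _ hs.ne'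
  constructor
  · calc a = algSigmoid a * √(1 + a ^ 2) := hg.symm
      _ ≤ erf a * √(1 + a ^ 2) := mul_le_mul_of_nonneg_right (algSigmoid_le_erf ha) hs.le
  · calc erf a * √(1 + a ^ 2) ≤ √2 * algSigmoid a * √(1 + a ^ 2) :=
          mul_le_mul_of_nonneg_right (erf_le_sqrt_two_mul_algSigmoid ha) hs.le
      _ = √2 * a := by rw [mul_assoc, hg]
end

section
/- Let (Zₙ) be a sequence of real random variables converging weakly to Z, where the distribution function of Z is continuous. Then for every ε > 0, Q(Zₙ, ε) → Q(Z, ε) as n → ∞, where Q(X, ε) = sup_t P(t ≤ X ≤ t + ε). -/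
/-!
Since the limiting distribution function `F` is continuous, pointwise convergence of the
distribution functions `Fₙ → F` is uniform (Pólya). The mass of `[t, t + ε]` is
`F (t + ε) - F (t-)`, so it differs between `Zₙ` and `Z` by at most `2 ‖Fₙ - F‖_∞`
uniformly in `t`, and so does its supremum over `t`.
-/

open MeasureTheory ProbabilityTheory Filter Set Function Topology

lemma abs_ciSup_sub_ciSup_le {ι : Type*} [Nonempty ι] {f g : ι → ℝ}
    (hf : BddAbove (range f)) (hg : BddAbove (range g)) {c : ℝ} (h : ∀ i, |f i - g i| ≤ c) :
    |(⨆ i, f i) - ⨆ i, g i| ≤ c := by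
  rw [abs_sub_le_iff]
  constructor
  · refine sub_le_iff_le_add.2 (ciSup_le fun i => ?_)
    linarith [(abs_sub_le_iff.1 (h i)).1, le_ciSup hg i]
  · refine sub_le_iff_le_add.2 (ciSup_le fun i => ?_)
    linarith [(abs_sub_le_iff.1 (h i)).2, le_ciSup hf i]

lemma abs_sub_le_of_sandwich {f g fl fu gl gu η : ℝ} (hfl : fl ≤ f) (hfu : f ≤ fu)
    (hgl : gl ≤ g) (hgu : g ≤ gu) (hl : |fl - gl| ≤ η) (hu : |fu - gu| ≤ η)
    (hosc : gu - gl ≤ η) : |f - g| ≤ 2 * η := by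
  rw [abs_le] at hl hu ⊢
  constructor <;> linarith

lemma Monotone.abs_leftLim_sub_leftLim_le {F G : ℝ → ℝ} (hF : Monotone F) (hG : Monotone G)
    {δ : ℝ} (h : ∀ t, |F t - G t| ≤ δ) (a : ℝ) : |leftLim F a - leftLim G a| ≤ δ :=
  _root_.le_of_tendsto ((hF.tendsto_leftLim a).sub (hG.tendsto_leftLim a)).abs
    (Eventually.of_forall h)

lemma ContinuousAt.exists_mem_Ioo_sub_le {G : ℝ → ℝ} {x : ℝ} (hG : ContinuousAt G x) {η : ℝ}
    (hη : 0 < η) : ∃ l u, x ∈ Ioo l u ∧ G u - G l ≤ η := by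
  obtain ⟨δ, hδ, hclose⟩ := Metric.continuousAt_iff.1 hG (η / 2) (half_pos hη)
  have hdist : ∀ y, |y - x| = δ / 2 → |G y - G x| < η / 2 := fun y hy =>
    hclose (by rw [Real.dist_eq, hy]; linarith)
  have hl := abs_lt.1 <| hdist (x - δ / 2) <| by
    rw [sub_sub_cancel_left, abs_neg, abs_of_pos (by positivity)]
  have hu := abs_lt.1 <| hdist (x + δ / 2) <| by
    rw [add_sub_cancel_left, abs_of_pos (by positivity)]
  exact ⟨x - δ / 2, x + δ / 2, ⟨by linarith, by linarith⟩, by linarith⟩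

/-- Pólya's theorem. -/
theorem tendstoUniformly_cdf_of_tendsto_cdf {ι : Type*} {L : Filter ι} {ν : ι → Measure ℝ}
    {ρ : Measure ℝ} (hν : ∀ t, Tendsto (fun i => cdf (ν i) t) L (𝓝 (cdf ρ t)))
    (hρ : Continuous (cdf ρ)) : TendstoUniformly (fun i => cdf (ν i)) (cdf ρ) L := by
  refine Metric.tendstoUniformly_iff.2 fun e he => ?_
  obtain ⟨η, hη, hηe⟩ : ∃ η, 0 < η ∧ 2 * η < e := ⟨e / 3, by positivity, by linarith⟩
  -- Outside `[a, b]` the bounds `0 ≤ cdf ≤ 1` do the work; inside, compactness provides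
  -- finitely many nodes bracketing every point with oscillation of `cdf ρ` at most `η`.
  obtain ⟨a, ha⟩ := ((tendsto_cdf_atBot ρ).eventually (ge_mem_nhds hη)).exists
  obtain ⟨b, hb⟩ :=
    ((tendsto_cdf_atTop ρ).eventually (le_mem_nhds (by linarith : 1 - η < 1))).exists
  choose l u hlu hosc using fun x => hρ.continuousAt.exists_mem_Ioo_sub_le (x := x) hη
  obtain ⟨s, hs⟩ := isCompact_Icc.elim_finite_subcover (fun x => Ioo (l x) (u x))
    (fun _ => isOpen_Ioo) (fun x _ => mem_iUnion.2 ⟨x, hlu x⟩)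
  have hclose : ∀ y, ∀ᶠ i in L, |cdf (ν i) y - cdf ρ y| ≤ η := fun y =>
    ((hν y).eventually (Metric.closedBall_mem_nhds _ hη)).mono fun i hi => by
      rwa [Real.dist_eq] at hi
  have hnodes := (hclose a).and <| (hclose b).and <|
    (eventually_all_finset s).2 fun x _ => (hclose (l x)).and (hclose (u x))
  filter_upwards [hnodes] with i ⟨hia, hib, his⟩ t
  rw [Real.dist_eq, abs_sub_comm]
  have hνmono := monotone_cdf (ν i)
  have hρmono := monotone_cdf ρ
  suffices |cdf (ν i) t - cdf ρ t| ≤ 2 * η by linarith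
  rcases lt_or_ge t a with hta | hat
  · exact abs_sub_le_of_sandwich (cdf_nonneg _ t) (hνmono hta.le) (cdf_nonneg _ t)
      (hρmono hta.le) (by simpa using hη.le) hia (by linarith)
  rcases lt_or_ge b t with hbt | htb
  · exact abs_sub_le_of_sandwich (hνmono hbt.le) (cdf_le_one _ t) (hρmono hbt.le)
      (cdf_le_one _ t) hib (by simpa using hη.le) (by linarith)
  obtain ⟨x, hx, htx⟩ := mem_iUnion₂.1 (hs ⟨hat, htb⟩)
  exact abs_sub_le_of_sandwich (hνmono htx.1.le) (hνmono htx.2.le) (hρmono htx.1.le)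
    (hρmono htx.2.le) (his x hx).1 (his x hx).2 (hosc x)

lemma tendsto_cdf_of_tendsto {ι : Type*} {L : Filter ι} {P : ι → ProbabilityMeasure ℝ}
    {P₀ : ProbabilityMeasure ℝ} (hP : Tendsto P L (𝓝 P₀)) {t : ℝ}
    (ht : ContinuousAt (cdf P₀) t) :
    Tendsto (fun i => cdf (P i) t) L (𝓝 (cdf P₀ t)) := by
  have hatom : (P₀ : Measure ℝ) (frontier (Iic t)) = 0 := by
    rw [frontier_Iic, ← measure_cdf (P₀ : Measure ℝ), StieltjesFunction.measure_singleton,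
      leftLim_eq_of_tendsto (ht.tendsto.mono_left nhdsWithin_le_nhds), sub_self,
      ENNReal.ofReal_zero]
  simp only [cdf_eq_real, measureReal_def]
  exact (ENNReal.tendsto_toReal (measure_ne_top _ _)).comp
    (ProbabilityMeasure.tendsto_measure_of_null_frontier_of_tendsto' hP hatom)

lemma measureReal_Icc_eq_cdf_sub_leftLim (ν : Measure ℝ) [IsProbabilityMeasure ν] {a b : ℝ}
    (hab : a ≤ b) : ν.real (Icc a b) = cdf ν b - leftLim (cdf ν) a := by
  have h := (cdf ν).measure_Icc a b
  rw [measure_cdf] at h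
  rw [measureReal_def, h, ENNReal.toReal_ofReal (sub_nonneg.2 ((monotone_cdf ν).leftLim_le hab))]

lemma abs_measureReal_Icc_sub_le (ν ρ : Measure ℝ) [IsProbabilityMeasure ν]
    [IsProbabilityMeasure ρ] {δ : ℝ} (h : ∀ t, |cdf ν t - cdf ρ t| ≤ δ) (a b : ℝ) :
    |ν.real (Icc a b) - ρ.real (Icc a b)| ≤ 2 * δ := by
  rcases le_or_gt a b with hab | hba
  · rw [measureReal_Icc_eq_cdf_sub_leftLim ν hab, measureReal_Icc_eq_cdf_sub_leftLim ρ hab]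
    have hleft := (monotone_cdf ν).abs_leftLim_sub_leftLim_le (monotone_cdf ρ) h a
    calc _ = |(cdf ν b - cdf ρ b) - (leftLim (cdf ν) a - leftLim (cdf ρ) a)| := by ring_nf
      _ ≤ |cdf ν b - cdf ρ b| + |leftLim (cdf ν) a - leftLim (cdf ρ) a| := abs_sub _ _
      _ ≤ 2 * δ := by linarith [h b]
  · simp only [Icc_eq_empty_of_lt hba, measureReal_empty, sub_self, abs_zero]
    linarith [abs_nonneg (cdf ν a - cdf ρ a), h a]

/-- The Lévy concentration function `Q(ν, ε)`. -/
noncomputable def concentration (ν : Measure ℝ) (ε : ℝ) : ℝ :=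
  ⨆ t : ℝ, ν.real (Icc t (t + ε))

lemma iSup_measure_toReal_eq_concentration_map {Ω : Type*} [MeasurableSpace Ω]
    {μ : Measure Ω} {X : Ω → ℝ} (hX : AEMeasurable X μ) (ε : ℝ) :
    ⨆ t : ℝ, (μ {ω | t ≤ X ω ∧ X ω ≤ t + ε}).toReal = concentration (μ.map X) ε := by
  simp only [concentration, measureReal_def,
    Measure.map_apply_of_aemeasurable hX measurableSet_Icc]
  rfl

lemma abs_concentration_sub_le (ν ρ : Measure ℝ) [IsProbabilityMeasure ν]
    [IsProbabilityMeasure ρ] {δ : ℝ} (h : ∀ t, |cdf ν t - cdf ρ t| ≤ δ) (ε : ℝ) :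
    |concentration ν ε - concentration ρ ε| ≤ 2 * δ :=
  abs_ciSup_sub_ciSup_le ⟨1, forall_mem_range.2 fun _ => measureReal_le_one⟩
    ⟨1, forall_mem_range.2 fun _ => measureReal_le_one⟩
    fun t => abs_measureReal_Icc_sub_le ν ρ h t (t + ε)

lemma tendsto_concentration_of_tendstoUniformly_cdf {ι : Type*} {L : Filter ι}
    {ν : ι → Measure ℝ} [∀ i, IsProbabilityMeasure (ν i)]
    {ρ : Measure ℝ} [IsProbabilityMeasure ρ]
    (h : TendstoUniformly (fun i => cdf (ν i)) (cdf ρ) L) (ε : ℝ) :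
    Tendsto (fun i => concentration (ν i) ε) L (𝓝 (concentration ρ ε)) := by
  refine Metric.tendsto_nhds.2 fun e he => ?_
  filter_upwards [Metric.tendstoUniformly_iff.1 h (e / 3) (by positivity)] with i hi
  have hclose : ∀ t, |cdf (ν i) t - cdf ρ t| ≤ e / 3 := fun t => by
    rw [← Real.dist_eq, dist_comm]
    exact (hi t).le
  rw [Real.dist_eq]
  linarith [abs_concentration_sub_le (ν i) ρ hclose ε]

theorem concentration_tendsto_of_weak_convergence_general
    {Ω : Type*} [MeasurableSpace Ω] (μ : Measure Ω) [IsProbabilityMeasure μ]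
    (Z : ℕ → Ω → ℝ) (Zlim : Ω → ℝ)
    (hZm : ∀ n, Measurable (Z n)) (hZl : Measurable Zlim)
    (hweak : ∀ f : BoundedContinuousFunction ℝ ℝ,
      Tendsto (fun n => ∫ x, f x ∂(μ.map (Z n))) atTop (nhds (∫ x, f x ∂(μ.map Zlim))))
    (hcont : Continuous fun t => ((μ.map Zlim) (Set.Iic t)).toReal)
    (ε : ℝ) :
    Tendsto (fun n => ⨆ t : ℝ, (μ {ω | t ≤ Z n ω ∧ Z n ω ≤ t + ε}).toReal) atTop
      (nhds (⨆ t : ℝ, (μ {ω | t ≤ Zlim ω ∧ Zlim ω ≤ t + ε}).toReal)) := by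
  have hν : ∀ n, IsProbabilityMeasure (μ.map (Z n)) := fun n =>
    Measure.isProbabilityMeasure_map (hZm n).aemeasurable
  have hρ : IsProbabilityMeasure (μ.map Zlim) := Measure.isProbabilityMeasure_map hZl.aemeasurable
  let P : ℕ → ProbabilityMeasure ℝ := fun n => ⟨μ.map (Z n), hν n⟩
  let P₀ : ProbabilityMeasure ℝ := ⟨μ.map Zlim, hρ⟩
  have hP : Tendsto P atTop (𝓝 P₀) :=
    ProbabilityMeasure.tendsto_iff_forall_integral_tendsto.2 hweak
  have hcdf : Continuous (cdf (μ.map Zlim)) := by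
    simpa only [← measureReal_def, ← cdf_eq_real] using hcont
  simp only [iSup_measure_toReal_eq_concentration_map (hZm _).aemeasurable,
    iSup_measure_toReal_eq_concentration_map hZl.aemeasurable]
  exact tendsto_concentration_of_tendstoUniformly_cdf
    (tendstoUniformly_cdf_of_tendsto_cdf (fun t => tendsto_cdf_of_tendsto hP hcdf.continuousAt)
      hcdf) ε

/-- If `Zₙ → Z` weakly and the distribution function of `Z` is continuous, then for every
`ε > 0` the concentration functions converge: `Q(Zₙ, ε) → Q(Z, ε)`. -/
theorem concentration_tendsto_of_weak_convergence
    {Ω : Type*} [MeasurableSpace Ω] (μ : Measure Ω) [IsProbabilityMeasure μ]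
    (Z : ℕ → Ω → ℝ) (Zlim : Ω → ℝ)
    (hZm : ∀ n, Measurable (Z n)) (hZl : Measurable Zlim)
    (hweak : ∀ f : BoundedContinuousFunction ℝ ℝ,
      Tendsto (fun n => ∫ x, f x ∂(μ.map (Z n))) atTop (nhds (∫ x, f x ∂(μ.map Zlim))))
    (hcont : Continuous fun t => ((μ.map Zlim) (Set.Iic t)).toReal)
    (ε : ℝ) (hε : 0 < ε) :
    Tendsto (fun n => ⨆ t : ℝ, (μ {ω | t ≤ Z n ω ∧ Z n ω ≤ t + ε}).toReal) atTop
      (nhds (⨆ t : ℝ, (μ {ω | t ≤ Zlim ω ∧ Zlim ω ≤ t + ε}).toReal)) :=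
  concentration_tendsto_of_weak_convergence_general μ Z Zlim hZm hZl hweak hcont ε
end

section
/- Let s ∈ (−1/2, 0) and t, u ∈ (0, 1). Then (∫ over [min(t,u), max(t,u)] of max(v, 1−v)^{s−1} dv)² ≤ (2/s²)[(t^{−s} − u^{−s})² + ((1−u)^{−s} − (1−t)^{−s})²], and the right-hand side, integrated over (t,u) ∈ (0,1)², is at most 8/((2s+1)(s+1)²). -/
open MeasureTheory intervalIntegral Set

/-!
For `v ∈ (0, 1)`, `b = max v (1 - v)`, `a = 1 - b` and `s ≥ -1/2`,
`b ^ (s - 1) ≤ b ^ (-s - 2) = (a + b) b ^ (-s - 2) ≤ a ^ (-s - 1) + b ^ (-s - 1)`, so the integrand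
is dominated by `v ^ (-s - 1) + (1 - v) ^ (-s - 1)`, which has the antiderivative
`(v ^ (-s) - (1 - v) ^ (-s)) / (-s)`; `(x + y)² ≤ 2x² + 2y²` then gives the first bound.
With `p = -s`, the integrand of the second bound is quadratic in `u ^ p` and `(1 - u) ^ p`, so it
integrates by `∫₀¹ u ^ p = 1 / (p + 1)`, `∫₀¹ u ^ (2p) = 1 / (2p + 1)` and the symmetry
`u ↦ 1 - u`. The double integral equals `8 / ((1 - 2s)(1 - s)²)`, which is at most
`8 / ((1 + 2s)(1 + s)²)` because `s < 0`.
-/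

lemma rpow_sub_one_le_of_add_eq_one {s a b : ℝ} (hs : -1 / 2 ≤ s) (ha : 0 < a) (hab : a ≤ b)
    (hsum : a + b = 1) : b ^ (s - 1) ≤ a ^ (-s - 1) + b ^ (-s - 1) := by
  have hb : 0 < b := ha.trans_le hab
  have hexp : -s - 1 = -s - 2 + 1 := by ring
  calc b ^ (s - 1) ≤ b ^ (-s - 2) :=
        Real.rpow_le_rpow_of_exponent_ge hb (by linarith) (by linarith)
    _ = a * b ^ (-s - 2) + b ^ (-s - 1) := by
        rw [hexp, Real.rpow_add_one hb.ne']
        linear_combination -b ^ (-s - 2) * hsum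
    _ ≤ a * a ^ (-s - 2) + b ^ (-s - 1) := by
        have := Real.rpow_le_rpow_of_nonpos ha hab (by linarith : -s - 2 ≤ 0)
        gcongr
    _ = a ^ (-s - 1) + b ^ (-s - 1) := by
        rw [hexp, Real.rpow_add_one ha.ne', mul_comm]

lemma max_one_sub_rpow_le {s v : ℝ} (hs : -1 / 2 ≤ s) (hv : v ∈ Ioo (0 : ℝ) 1) :
    max v (1 - v) ^ (s - 1) ≤ v ^ (-s - 1) + (1 - v) ^ (-s - 1) := by
  rcases le_total v (1 - v) with h | h
  · rw [max_eq_right h]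
    exact rpow_sub_one_le_of_add_eq_one hs hv.1 h (by ring)
  · rw [max_eq_left h, add_comm]
    exact rpow_sub_one_le_of_add_eq_one hs (sub_pos.2 hv.2) h (by ring)

lemma sq_integral_min_max_le {f g : ℝ → ℝ} {a b : ℝ} (hf : IntervalIntegrable f volume a b)
    (hg : IntervalIntegrable g volume a b) (hf0 : ∀ x ∈ uIcc a b, 0 ≤ f x)
    (hfg : ∀ x ∈ uIcc a b, f x ≤ g x) :
    (∫ x in min a b..max a b, f x) ^ 2 ≤ (∫ x in a..b, g x) ^ 2 := by
  have hsymm : (∫ x in min a b..max a b, g x) ^ 2 = (∫ x in a..b, g x) ^ 2 := by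
    rcases le_total a b with h | h
    · simp [h]
    · simp [h, integral_symm a b]
  rw [← hsymm]
  have hf' : IntervalIntegrable f volume (min a b) (max a b) :=
    hf.mono_set (uIcc_of_le min_le_max).subset
  have hg' : IntervalIntegrable g volume (min a b) (max a b) :=
    hg.mono_set (uIcc_of_le min_le_max).subset
  exact pow_le_pow_left₀ (integral_nonneg min_le_max hf0)
    (integral_mono_on min_le_max hf' hg' hfg) 2

lemma intervalIntegrable_one_sub_rpow {r : ℝ} (hr : -1 < r) (a b : ℝ) :
    IntervalIntegrable (fun v => (1 - v) ^ r) volume a b := by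
  simpa using (intervalIntegrable_rpow' hr (a := 1 - a) (b := 1 - b)).comp_sub_left 1

lemma integral_rpow_sub_one_add_one_sub {p : ℝ} (hp : 0 < p) (t u : ℝ) :
    ∫ v in t..u, (v ^ (p - 1) + (1 - v) ^ (p - 1)) =
      (u ^ p - t ^ p + ((1 - t) ^ p - (1 - u) ^ p)) / p := by
  have hr : -1 < p - 1 := by linarith
  rw [integral_add (intervalIntegrable_rpow' hr) (intervalIntegrable_one_sub_rpow hr t u),
    integral_comp_sub_left (fun v => v ^ (p - 1)), integral_rpow (Or.inl hr),
    integral_rpow (Or.inl hr), sub_add_cancel, add_div]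

lemma sq_integral_max_one_sub_rpow_le {s t u : ℝ} (hs1 : -1 / 2 ≤ s) (hs2 : s < 0)
    (ht : t ∈ Ioo (0 : ℝ) 1) (hu : u ∈ Ioo (0 : ℝ) 1) :
    (∫ v in min t u..max t u, max v (1 - v) ^ (s - 1)) ^ 2 ≤
      2 / s ^ 2 * ((t ^ (-s) - u ^ (-s)) ^ 2 + ((1 - u) ^ (-s) - (1 - t) ^ (-s)) ^ 2) := by
  have hr : -1 < -s - 1 := by linarith
  have hmax_pos (v : ℝ) : 0 < max v (1 - v) := by
    linarith [le_max_left v (1 - v), le_max_right v (1 - v)]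
  have hcont : Continuous fun v : ℝ => max v (1 - v) ^ (s - 1) :=
    (continuous_id.max (continuous_const.sub continuous_id)).rpow_const
      fun v => Or.inl (hmax_pos v).ne'
  have hsub : uIcc t u ⊆ Ioo 0 1 := ordConnected_Ioo.uIcc_subset ht hu
  calc _ ≤ (∫ v in t..u, (v ^ (-s - 1) + (1 - v) ^ (-s - 1))) ^ 2 :=
        sq_integral_min_max_le (hcont.intervalIntegrable t u)
          ((intervalIntegrable_rpow' hr).add (intervalIntegrable_one_sub_rpow hr t u))
          (fun v _ => (Real.rpow_pos_of_pos (hmax_pos v) _).le)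
          (fun v hv => max_one_sub_rpow_le hs1 (hsub hv))
    _ = (u ^ (-s) - t ^ (-s) + ((1 - t) ^ (-s) - (1 - u) ^ (-s))) ^ 2 / s ^ 2 := by
        rw [integral_rpow_sub_one_add_one_sub (neg_pos.2 hs2), div_pow, neg_sq]
    _ ≤ 2 / s ^ 2 * ((t ^ (-s) - u ^ (-s)) ^ 2 + ((1 - u) ^ (-s) - (1 - t) ^ (-s)) ^ 2) := by
        rw [div_mul_eq_mul_div]
        gcongr
        nlinarith [sq_nonneg (u ^ (-s) - t ^ (-s) - ((1 - t) ^ (-s) - (1 - u) ^ (-s)))]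

lemma integral_quadratic_rpow {p : ℝ} (hp : -1 / 2 < p) (a b c : ℝ) :
    ∫ u in (0 : ℝ)..1, (a * (u ^ p) ^ 2 + b * u ^ p + c) = a / (2 * p + 1) + b / (p + 1) + c := by
  have hsq : EqOn (fun u : ℝ => a * (u ^ p) ^ 2 + b * u ^ p + c)
      (fun u => a * u ^ (2 * p) + b * u ^ p + c) (uIcc 0 1) := by
    intro u hu
    rw [uIcc_of_le zero_le_one] at hu
    simp only [← Real.rpow_mul_natCast hu.1, Nat.cast_ofNat, mul_comm p]
  have h1 : -1 < p := by linarith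
  have h2 : -1 < 2 * p := by linarith
  have hA := (intervalIntegrable_rpow' h2 (a := 0) (b := 1)).const_mul a
  have hB := (intervalIntegrable_rpow' h1 (a := 0) (b := 1)).const_mul b
  rw [integral_congr hsq, intervalIntegral.integral_add (hA.add hB) intervalIntegrable_const,
    intervalIntegral.integral_add hA hB, intervalIntegral.integral_const_mul,
    intervalIntegral.integral_const_mul, integral_rpow (Or.inl h1), integral_rpow (Or.inl h2),
    intervalIntegral.integral_const]
  simp [Real.zero_rpow (by linarith : p + 1 ≠ 0), Real.zero_rpow (by linarith : 2 * p + 1 ≠ 0),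
    div_eq_mul_inv]

lemma integral_quadratic_one_sub_rpow {p : ℝ} (hp : -1 / 2 < p) (a b c : ℝ) :
    ∫ u in (0 : ℝ)..1, (a * ((1 - u) ^ p) ^ 2 + b * (1 - u) ^ p + c) =
      a / (2 * p + 1) + b / (p + 1) + c := by
  rw [← integral_quadratic_rpow hp]
  simpa using
    integral_comp_sub_left (fun u : ℝ => a * (u ^ p) ^ 2 + b * u ^ p + c) 1 (a := 0) (b := 1)

lemma integral_quadratic_rpow_add_one_sub {p : ℝ} (hp : 0 ≤ p) (a b c a' b' c' : ℝ) :
    ∫ u in (0 : ℝ)..1, ((a * (u ^ p) ^ 2 + b * u ^ p + c) +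
        (a' * ((1 - u) ^ p) ^ 2 + b' * (1 - u) ^ p + c')) =
      (a / (2 * p + 1) + b / (p + 1) + c) + (a' / (2 * p + 1) + b' / (p + 1) + c') := by
  have hp' : -1 / 2 < p := by linarith
  rw [intervalIntegral.integral_add
    ((by fun_prop (disch := assumption) : Continuous _).intervalIntegrable 0 1)
    ((by fun_prop (disch := assumption) : Continuous _).intervalIntegrable 0 1),
    integral_quadratic_rpow hp', integral_quadratic_one_sub_rpow hp']

lemma integral_integral_sq_sub_rpow {p : ℝ} (hp : 0 ≤ p) :
    ∫ t in (0 : ℝ)..1, ∫ u in (0 : ℝ)..1, ((t ^ p - u ^ p) ^ 2 + ((1 - u) ^ p - (1 - t) ^ p) ^ 2) =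
      4 / (2 * p + 1) - 4 / (p + 1) ^ 2 := by
  have inner (t : ℝ) :
      ∫ u in (0 : ℝ)..1, ((t ^ p - u ^ p) ^ 2 + ((1 - u) ^ p - (1 - t) ^ p) ^ 2) =
        (1 * (t ^ p) ^ 2 + -2 / (p + 1) * t ^ p + 1 / (2 * p + 1)) +
          (1 * ((1 - t) ^ p) ^ 2 + -2 / (p + 1) * (1 - t) ^ p + 1 / (2 * p + 1)) := by
    calc _ = ∫ u in (0 : ℝ)..1, ((1 * (u ^ p) ^ 2 + -2 * t ^ p * u ^ p + (t ^ p) ^ 2) +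
          (1 * ((1 - u) ^ p) ^ 2 + -2 * (1 - t) ^ p * (1 - u) ^ p + ((1 - t) ^ p) ^ 2)) := by
          congr 1; ext u; ring
      _ = _ := by rw [integral_quadratic_rpow_add_one_sub hp]; ring
  simp_rw [inner]
  rw [integral_quadratic_rpow_add_one_sub hp]
  have : p + 1 ≠ 0 := by linarith
  have : 2 * p + 1 ≠ 0 := by linarith
  field_simp
  ring

/-- The integral estimate underlying the variance upper bound for `s`-concave
distributions, for `s ∈ (−1/2, 0)`. -/
theorem sConcave_integral_estimate (s : ℝ) (hs1 : -1 / 2 < s) (hs2 : s < 0) :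
    (∀ t u : ℝ, t ∈ Set.Ioo (0 : ℝ) 1 → u ∈ Set.Ioo (0 : ℝ) 1 →
      (∫ v in min t u..max t u, (max v (1 - v)) ^ (s - 1)) ^ 2 ≤
        2 / s ^ 2 * ((t ^ (-s) - u ^ (-s)) ^ 2 + ((1 - u) ^ (-s) - (1 - t) ^ (-s)) ^ 2)) ∧
    (∫ t in (0:ℝ)..1, ∫ u in (0:ℝ)..1,
        2 / s ^ 2 * ((t ^ (-s) - u ^ (-s)) ^ 2 + ((1 - u) ^ (-s) - (1 - t) ^ (-s)) ^ 2)) ≤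
      8 / ((2 * s + 1) * (s + 1) ^ 2) := by
  refine ⟨fun t u ht hu => sq_integral_max_one_sub_rpow_le hs1.le hs2 ht hu, ?_⟩
  simp_rw [intervalIntegral.integral_const_mul]
  rw [integral_integral_sq_sub_rpow (neg_nonneg.2 hs2.le)]
  calc 2 / s ^ 2 * (4 / (2 * -s + 1) - 4 / (-s + 1) ^ 2) = 8 / ((1 - 2 * s) * (1 - s) ^ 2) := by
        rw [show 2 * -s + 1 = 1 - 2 * s by ring, show -s + 1 = 1 - s by ring]
        have : 1 - 2 * s ≠ 0 := by linarith
        have : 1 - s ≠ 0 := by linarith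
        have : s ≠ 0 := hs2.ne
        field_simp
        ring
    _ ≤ 8 / ((2 * s + 1) * (s + 1) ^ 2) :=
        div_le_div_of_nonneg_left (by norm_num) (mul_pos (by linarith) (pow_pos (by linarith) 2))
          (by nlinarith)
end
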